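/- For any tree T ∈ T* of height k (rooted at a main root), the diameter of T is either 2k−1 or 2k (for k ≥ 1). -/
import Mathlib


/-- The tree `T₀ ⊙ (T₁,…,T_p)`: disjoint union of the rooted trees `T₀,…,T_p`
together with the edges from the root of `T₀` to the roots of `T₁,…,T_p`. -/
def odotGraph {p : ℕ} {V : Fin (p + 1) → Type*} (G : ∀ i, SimpleGraph (V i))
    (r : ∀ i, V i) : SimpleGraph (Σ i, V i) :=
  SimpleGraph.fromRel (fun a b =>
    (∃ h : a.1 = b.1, (G b.1).Adj (h ▸ a.2) b.2) ∨ (a = ⟨0, r 0⟩ ∧ b.2 = r b.1))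

open SimpleGraph

section helpers
lemma walk_lipschitz {α : Type*} {G : SimpleGraph α} (f : α → ℤ)
    (hf : ∀ a b, G.Adj a b → |f a - f b| ≤ 1) {u w : α} (W : G.Walk u w) :
    |f u - f w| ≤ W.length := by
  induction W with
  | nil => simp
  | @cons u b w h W ih =>
    have := hf u b h
    have h2 : |f u - f w| ≤ |f u - f b| + |f b - f w| := abs_sub_le _ _ _
    simp only [Walk.length_cons]
    push_cast
    omega

lemma dist_hom_le {α β : Type*} {G : SimpleGraph α} {H : SimpleGraph β} (f : G →g H) (u v : α)
    (hr : G.Reachable u v) : H.dist (f u) (f v) ≤ G.dist u v := by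
  obtain ⟨W, hW⟩ := hr.exists_walk_length_eq_dist
  calc H.dist (f u) (f v) ≤ (W.map f).length := dist_le _
    _ = W.length := Walk.length_map _ _
    _ = G.dist u v := hW

lemma dist_iso {α β : Type*} {G : SimpleGraph α} {H : SimpleGraph β} (e : G ≃g H) (u v : α) :
    H.dist (e u) (e v) = G.dist u v := by
  by_cases hr : G.Reachable u v
  · refine le_antisymm (dist_hom_le e.toHom u v hr) ?_
    have h2 := dist_hom_le e.symm.toHom (e u) (e v) ((Iso.reachable_iff (φ := e)).mpr hr)
    simpa using h2
  · rw [dist_eq_zero_of_not_reachable hr, dist_eq_zero_of_not_reachable]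
    rw [Iso.reachable_iff (φ := e)]
    exact hr

lemma absDistSubLe {α : Type*} {G : SimpleGraph α} (hc : G.Connected) (r : α) {x y : α}
    (h : G.Adj x y) : |(G.dist r x : ℤ) - G.dist r y| ≤ 1 := by
  have e1 : G.dist y x ≤ 1 := by simpa using dist_le (Walk.cons h.symm Walk.nil)
  have e2 : G.dist x y ≤ 1 := by simpa using dist_le (Walk.cons h Walk.nil)
  have h1 : G.dist r x ≤ G.dist r y + 1 :=
    le_trans (hc.dist_triangle (v := y)) (by omega)
  have h2 : G.dist r y ≤ G.dist r x + 1 :=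
    le_trans (hc.dist_triangle (v := x)) (by omega)
  rw [abs_le]; constructor <;> omega
end helpers

section odot
variable {p : ℕ} {V : Fin (p + 1) → Type*} (G : ∀ i, SimpleGraph (V i)) (r : ∀ i, V i)

def odotCompHom (i : Fin (p + 1)) : G i →g odotGraph G r where
  toFun x := ⟨i, x⟩
  map_rel' := by
    intro x y hxy
    exact ⟨by simp [hxy.ne], Or.inl (Or.inl ⟨rfl, hxy⟩)⟩

lemma odot_adj_root {i : Fin (p + 1)} (hi : i ≠ 0) :
    (odotGraph G r).Adj ⟨0, r 0⟩ ⟨i, r i⟩ := by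
  exact ⟨by simp [Ne.symm hi], Or.inl (Or.inr ⟨rfl, rfl⟩)⟩

lemma odot_adj_elim {a b : Σ i, V i} (h : (odotGraph G r).Adj a b) :
    (∃ h : a.1 = b.1, (G b.1).Adj (h ▸ a.2) b.2) ∨
      (a = ⟨0, r 0⟩ ∧ b.2 = r b.1) ∨ (b = ⟨0, r 0⟩ ∧ a.2 = r a.1) := by
  obtain ⟨hne, h | h⟩ := h
  · rcases h with h | h
    · exact Or.inl h
    · exact Or.inr (Or.inl h)
  · rcases h with h | h
    · obtain ⟨i, x⟩ := a
      obtain ⟨j, y⟩ := b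
      obtain ⟨hij, hadj⟩ := h
      cases hij
      exact Or.inl ⟨rfl, hadj.symm⟩
    · exact Or.inr (Or.inr h)

lemma odot_dist_lower (hc0 : (G 0).Connected) {i : Fin (p + 1)} (hi : i ≠ 0)
    (hci : (G i).Connected) (x : V 0) (y : V i)
    (hr : (odotGraph G r).Reachable ⟨0, x⟩ ⟨i, y⟩) :
    (G 0).dist (r 0) x + 1 + (G i).dist (r i) y ≤ (odotGraph G r).dist ⟨0, x⟩ ⟨i, y⟩ := by
  set f : (Σ j, V j) → ℤ := fun a =>
    if h0 : a.1 = 0 then ((G 0).dist (r 0) (h0 ▸ a.2) : ℤ)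
    else if h1 : a.1 = i then -(1 + ((G i).dist (r i) (h1 ▸ a.2) : ℤ))
    else 0 with hfdef
  have hf : ∀ a b, (odotGraph G r).Adj a b → |f a - f b| ≤ 1 := by
    intro a b hab
    have hne := hab.ne
    rcases odot_adj_elim G r hab with ⟨hj, hadj⟩ | ⟨ha, hb⟩ | ⟨hb, ha⟩
    · obtain ⟨ja, xa⟩ := a
      obtain ⟨jb, xb⟩ := b
      simp only at hj
      subst hj
      simp only at hadj
      by_cases h0 : ja = 0
      · subst h0
        simp only [hfdef, dif_pos]
        exact absDistSubLe hc0 (r 0) hadj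
      · by_cases h1 : ja = i
        · subst h1
          simp only [hfdef, dif_neg h0, dif_pos]
          have := absDistSubLe hci (r ja) hadj
          rw [abs_le] at this ⊢
          omega
        · simp only [hfdef, dif_neg h0, dif_neg h1]
          simp
    · subst ha
      obtain ⟨jb, xb⟩ := b
      simp only at hb
      subst hb
      by_cases h0 : jb = 0
      · subst h0; exact absurd rfl hne
      · by_cases h1 : jb = i
        · subst h1
          simp only [hfdef, dif_pos, dif_neg h0]
          simp [dist_self]
        · simp only [hfdef, dif_pos, dif_neg h0, dif_neg h1]
          simp [dist_self]
    · subst hb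
      obtain ⟨ja, xa⟩ := a
      simp only at ha
      subst ha
      by_cases h0 : ja = 0
      · subst h0; exact absurd rfl hne.symm
      · by_cases h1 : ja = i
        · subst h1
          simp only [hfdef, dif_pos, dif_neg h0]
          simp [dist_self]
        · simp only [hfdef, dif_pos, dif_neg h0, dif_neg h1]
          simp [dist_self]
  obtain ⟨W, hW⟩ := hr.exists_walk_length_eq_dist
  have hlip := walk_lipschitz f hf W
  rw [hW] at hlip
  have hfx : f ⟨0, x⟩ = ((G 0).dist (r 0) x : ℤ) := by simp [hfdef]
  have hfy : f ⟨i, y⟩ = -(1 + ((G i).dist (r i) y : ℤ)) := by simp [hfdef, hi]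
  rw [hfx, hfy, abs_le] at hlip
  omega
end odot

/-- The family `T*` of rooted trees (considered up to isomorphism): `K₁` is in `T*`
with height `0`, and if `T₀,…,T_p ∈ T*` (`p ≥ 1`) all have height `k`, then
`T₀ ⊙ (T₁,…,T_p) ∈ T*` with height `k + 1`. -/
inductive InTStar : {α : Type} → SimpleGraph α → α → ℕ → Prop
  | single {α : Type} (v : α) (h : ∀ x : α, x = v) : InTStar (⊥ : SimpleGraph α) v 0
  | step {p k : ℕ} (hp : 1 ≤ p) {V : Fin (p + 1) → Type} (G : ∀ i, SimpleGraph (V i))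
      (r : ∀ i, V i) (h : ∀ i, InTStar (G i) (r i) k) :
      InTStar (odotGraph G r) ⟨0, r 0⟩ (k + 1)
  | iso {α β : Type} {G : SimpleGraph α} {G' : SimpleGraph β} (e : G ≃g G') {v : α}
      {k : ℕ} (h : InTStar G v k) : InTStar G' (e v) k

/-- `G` has diameter `d` (number of edges of a longest shortest path). -/
def HasDiamG {α : Type*} (G : SimpleGraph α) (d : ℕ) : Prop :=
  (∃ u v, G.dist u v = d) ∧ ∀ u v, G.dist u v ≤ d


lemma inTStar_key {α : Type} {G : SimpleGraph α} {v : α} {k : ℕ} (h : InTStar G v k) :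
    G.Connected ∧ (∀ x, G.dist v x ≤ k) ∧ (∃ x, G.dist v x = k) ∧
      (1 ≤ k → ∃ u w, 2 * k - 1 ≤ G.dist u w) := by
  induction h with
  | single v hv =>
    refine ⟨?_, fun x => by rw [hv x, SimpleGraph.dist_self],
      ⟨v, SimpleGraph.dist_self⟩, by omega⟩
    rw [connected_iff]
    exact ⟨fun a b => by rw [hv a, hv b], ⟨v⟩⟩
  | @step p k hp V G r h ih =>
    have hc : ∀ i, (G i).Connected := fun i => (ih i).1
    have hle : ∀ i x, (G i).dist (r i) x ≤ k := fun i => (ih i).2.1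
    have hex : ∀ i, ∃ x, (G i).dist (r i) x = k := fun i => (ih i).2.2.1
    have reach_comp : ∀ (i : Fin (p+1)) (x y : V i),
        (odotGraph G r).Reachable ⟨i, x⟩ ⟨i, y⟩ :=
      fun i x y => Reachable.map (odotCompHom G r i) ((hc i).preconnected x y)
    have reach_root : ∀ (i : Fin (p+1)) (x : V i),
        (odotGraph G r).Reachable ⟨0, r 0⟩ ⟨i, x⟩ := by
      intro i x
      by_cases hi : i = 0
      · subst hi; exact reach_comp 0 (r 0) x
      · exact ((odot_adj_root G r hi).reachable).trans (reach_comp i (r i) x)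
    have hconn : (odotGraph G r).Connected := by
      rw [connected_iff]
      refine ⟨fun a b => ?_, ⟨⟨0, r 0⟩⟩⟩
      obtain ⟨i, x⟩ := a
      obtain ⟨j, y⟩ := b
      exact (reach_root i x).symm.trans (reach_root j y)
    have dist_comp_le : ∀ (i : Fin (p+1)) (x y : V i),
        (odotGraph G r).dist ⟨i, x⟩ ⟨i, y⟩ ≤ (G i).dist x y :=
      fun i x y => dist_hom_le (odotCompHom G r i) x y ((hc i).preconnected x y)
    have dist_root_le : ∀ (i : Fin (p+1)) (x : V i),
        (odotGraph G r).dist ⟨0, r 0⟩ ⟨i, x⟩ ≤ k + 1 := by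
      intro i x
      by_cases hi : i = 0
      · subst hi
        exact le_trans (dist_comp_le 0 (r 0) x) (by have := hle 0 x; omega)
      · have t1 : (odotGraph G r).dist ⟨0, r 0⟩ ⟨i, r i⟩ ≤ 1 := by
          simpa using dist_le (Walk.cons (odot_adj_root G r hi) Walk.nil)
        have t2 := (dist_comp_le i (r i) x).trans (hle i x)
        have := hconn.dist_triangle (u := (⟨0, r 0⟩ : Σ i, V i)) (v := ⟨i, r i⟩) (w := ⟨i, x⟩)
        omega
    set i₁ : Fin (p + 1) := ⟨1, by omega⟩ with hi₁def
    have hi₁ : i₁ ≠ 0 := by simp [hi₁def, Fin.ext_iff]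
    obtain ⟨u₀, hu₀⟩ := hex 0
    obtain ⟨u₁, hu₁⟩ := hex i₁
    refine ⟨hconn, ?_, ?_, ?_⟩
    · intro x
      obtain ⟨i, x⟩ := x
      exact dist_root_le i x
    · refine ⟨⟨i₁, u₁⟩, le_antisymm (dist_root_le i₁ u₁) ?_⟩
      have := odot_dist_lower G r (hc 0) hi₁ (hc i₁) (r 0) u₁ (reach_root i₁ u₁)
      rw [SimpleGraph.dist_self, hu₁] at this
      omega
    · intro _
      refine ⟨⟨0, u₀⟩, ⟨i₁, u₁⟩, ?_⟩
      have hr : (odotGraph G r).Reachable ⟨0, u₀⟩ ⟨i₁, u₁⟩ :=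
        (reach_comp 0 u₀ (r 0)).trans (reach_root i₁ u₁)
      have := odot_dist_lower G r (hc 0) hi₁ (hc i₁) u₀ u₁ hr
      rw [hu₀, hu₁] at this
      omega
  | iso e h ih =>
    obtain ⟨hcon, h1, h2, h3⟩ := ih
    refine ⟨(Iso.connected_iff e).mp hcon, fun x => ?_, ?_, fun hk => ?_⟩
    · have := h1 (e.symm x)
      rw [← dist_iso e] at this
      simpa using this
    · obtain ⟨x, hx⟩ := h2
      exact ⟨e x, by rw [dist_iso e]; exact hx⟩
    · obtain ⟨u, w, huw⟩ := h3 hk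
      exact ⟨e u, e w, by rw [dist_iso e]; exact huw⟩

/-- Any tree in `T*` of height `k ≥ 1` (rooted at a main root) has diameter
`2k − 1` or `2k`. -/
theorem stmt12 {α : Type} (G : SimpleGraph α) (v : α) (k : ℕ) (hk : 1 ≤ k)
    (h : InTStar G v k) : HasDiamG G (2 * k - 1) ∨ HasDiamG G (2 * k) := by
  obtain ⟨hconn, hle, -, hlow⟩ := inTStar_key h
  obtain ⟨u₀, w₀, hlow⟩ := hlow hk
  have hub : ∀ u w, G.dist u w ≤ 2 * k := by
    intro u w
    have ht := hconn.dist_triangle (u := u) (v := v) (w := w)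
    have h1 := hle u
    have h2 := hle w
    rw [SimpleGraph.dist_comm] at h1
    omega
  set S : Set ℕ := Set.range (fun q : α × α => G.dist q.1 q.2) with hS
  have hbdd : BddAbove S := ⟨2 * k, by rintro n ⟨⟨a, b⟩, rfl⟩; exact hub a b⟩
  have hne : S.Nonempty := ⟨_, ⟨(u₀, w₀), rfl⟩⟩
  obtain ⟨⟨a, b⟩, hab⟩ := Nat.sSup_mem hne hbdd
  have hupper : ∀ u w, G.dist u w ≤ sSup S := fun u w => le_csSup hbdd ⟨(u, w), rfl⟩
  have h1 : 2 * k - 1 ≤ sSup S := le_trans hlow (hupper u₀ w₀)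
  have h2 : sSup S ≤ 2 * k := csSup_le hne (by rintro n ⟨⟨a, b⟩, rfl⟩; exact hub a b)
  rcases (by omega : sSup S = 2 * k - 1 ∨ sSup S = 2 * k) with hd | hd
  · exact Or.inl ⟨⟨a, b, by rw [← hd]; exact hab⟩, fun u w => hd ▸ hupper u w⟩
  · exact Or.inr ⟨⟨a, b, by rw [← hd]; exact hab⟩, fun u w => hd ▸ hupper u w⟩
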